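/- (Dominated Convergence Theorem) Let (X, 𝒰, ∫) be a complete Daniell space, let f_n ∈ 𝒰 be a sequence of functions converging to a function f : X → ℝ at all points outside a null set, and suppose there exists h ∈ 𝒰 such that |f_n(x)| ≤ h(x) for all x ∈ X and all n ∈ ℕ. Then f ∈ 𝒰 and ∫|f_n − f| → 0. -/

import Mathlib

/-!
Completeness makes `𝒰` closed under monotone limits with bounded integrals (write the limit
as a telescoping series). Hence the tail suprema `sup_{k ≥ m} fₖ`, monotone limits of finite
maxima with integrals at most `∫ h`, lie in `𝒰`, and so does their decreasing limit
`limsup fₖ`. This agrees with `f` off the null set `S`, and a function that agrees with an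
element of `𝒰` off a null set is in `𝒰`. Running the same argument on `|fₖ - f| ≤ h + |f|`,
the functions `eₘ = sup_{k ≥ m} |fₖ - f|` lie in `𝒰` and decrease to `0` off `S`. Then
`∫ eₘ → 0`, because condition (II) tolerates an exceptional null set. Finally
`|fₘ - f| ≤ eₘ`.
-/

open Filter Topology

/-- A Daniell space: a Riesz space `U` of real-valued functions on `X` together with a
positive linear functional `integral` satisfying the Daniell continuity condition (II). -/
structure DaniellSpace (X : Type*) where
  U : Set (X → ℝ)
  integral : (X → ℝ) → ℝ
  zero_mem : (0 : X → ℝ) ∈ U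
  add_mem : ∀ {f g : X → ℝ}, f ∈ U → g ∈ U → f + g ∈ U
  smul_mem : ∀ (c : ℝ) {f : X → ℝ}, f ∈ U → c • f ∈ U
  sup_mem : ∀ {f g : X → ℝ}, f ∈ U → g ∈ U → f ⊔ g ∈ U
  inf_mem : ∀ {f g : X → ℝ}, f ∈ U → g ∈ U → f ⊓ g ∈ U
  integral_add : ∀ {f g : X → ℝ}, f ∈ U → g ∈ U →
    integral (f + g) = integral f + integral g
  integral_smul : ∀ (c : ℝ) {f : X → ℝ}, f ∈ U → integral (c • f) = c * integral f
  integral_nonneg : ∀ {f : X → ℝ}, f ∈ U → (∀ x, 0 ≤ f x) → 0 ≤ integral f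
  integral_tendsto_zero : ∀ f : ℕ → X → ℝ, (∀ n, f n ∈ U) → Antitone f →
    (∀ x, Tendsto (fun n => f n x) atTop (𝓝 (0 : ℝ))) →
    Tendsto (fun n => integral (f n)) atTop (𝓝 (0 : ℝ))

/-- `f ≃ ∑ fₙ` : the `fₙ` belong to `U`, `∑ ∫|fₙ| < ∞`, and `f x = ∑ fₙ x` at every
point where the series converges absolutely. -/
def DaniellSpace.Rep {X : Type*} (D : DaniellSpace X) (f : X → ℝ) (fs : ℕ → X → ℝ) : Prop :=
  (∀ n, fs n ∈ D.U) ∧ (Summable fun n => D.integral |fs n|) ∧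
  ∀ x, (Summable fun n => |fs n x|) → HasSum (fun n => fs n x) (f x)

/-- The extension `𝒰*` of `𝒰`. -/
def DaniellSpace.Ustar {X : Type*} (D : DaniellSpace X) : Set (X → ℝ) :=
  {f | ∃ fs, D.Rep f fs}

-- The integral on `𝒰*`: `∫ f = ∑ ∫ fₙ` for any representation `f ≃ ∑ fₙ`
-- (the value is independent of the representation).
open Classical in
noncomputable def DaniellSpace.integralStar {X : Type*} (D : DaniellSpace X)
    (f : X → ℝ) : ℝ :=
  if h : ∃ fs, D.Rep f fs then ∑' n, D.integral (h.choose n) else 0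

/-- A Daniell space is complete if `f ≃ ∑ fₙ` with all `fₙ ∈ 𝒰` implies `f ∈ 𝒰`. -/
def DaniellSpace.Complete {X : Type*} (D : DaniellSpace X) : Prop :=
  ∀ (f : X → ℝ) (fs : ℕ → X → ℝ), D.Rep f fs → f ∈ D.U

/-- A null set: its characteristic function is a null function. -/
def DaniellSpace.NullSet {X : Type*} (D : DaniellSpace X) (S : Set X) : Prop :=
  S.indicator (fun _ => (1 : ℝ)) ∈ D.U ∧ D.integral (S.indicator fun _ => (1 : ℝ)) = 0

open Set

/-- Junk value `0` when `a` is not bounded above. -/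
noncomputable def tailSup (a : ℕ → ℝ) (m : ℕ) : ℝ := ⨆ k, a (m + k)

section TailSup

variable {a : ℕ → ℝ}

theorem le_tailSup (ha : BddAbove (range a)) (m k : ℕ) : a (m + k) ≤ tailSup a m :=
  le_ciSup (ha.mono (range_comp_subset_range (m + ·) a)) k

theorem tailSup_le {m : ℕ} {c : ℝ} (h : ∀ k, a (m + k) ≤ c) : tailSup a m ≤ c :=
  ciSup_le h

theorem tailSup_antitone (ha : BddAbove (range a)) : Antitone (tailSup a) :=
  antitone_nat_of_succ_le fun m => tailSup_le fun k => by
    rw [Nat.add_right_comm]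
    exact le_tailSup ha m (k + 1)

theorem Filter.Tendsto.tailSup {y : ℝ} (ha : Tendsto a atTop (𝓝 y)) :
    Tendsto (tailSup a) atTop (𝓝 y) := by
  have hbdd := ha.bddAbove_range
  rw [tendsto_order] at ha ⊢
  refine ⟨fun b hb => (ha.1 b hb).mono fun m hm => hm.trans_le (le_tailSup hbdd m 0),
    fun c hc => ?_⟩
  obtain ⟨c', hyc', hc'c⟩ := exists_between hc
  obtain ⟨N, hN⟩ := eventually_atTop.1 (ha.2 c' hyc')
  exact eventually_atTop.2 ⟨N, fun m hm =>
    (tailSup_le fun k => (hN (m + k) (by omega)).le).trans_lt hc'c⟩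

theorem tendsto_partialSups_tailSup (ha : BddAbove (range a)) (m : ℕ) :
    Tendsto (partialSups fun k => a (m + k)) atTop (𝓝 (tailSup a m)) := by
  have hbdd : BddAbove (range fun k => a (m + k)) := ha.mono (range_comp_subset_range _ a)
  rw [tailSup, ← ciSup_partialSups_eq hbdd]
  exact tendsto_atTop_ciSup (partialSups _).monotone (bddAbove_range_partialSups.2 hbdd)

end TailSup

namespace DaniellSpace

variable {X : Type*} (D : DaniellSpace X)

theorem neg_mem {f : X → ℝ} (hf : f ∈ D.U) : -f ∈ D.U := by
  simpa using D.smul_mem (-1) hf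

theorem sub_mem {f g : X → ℝ} (hf : f ∈ D.U) (hg : g ∈ D.U) : f - g ∈ D.U := by
  simpa only [sub_eq_add_neg] using D.add_mem hf (D.neg_mem hg)

theorem abs_mem {f : X → ℝ} (hf : f ∈ D.U) : |f| ∈ D.U :=
  D.sup_mem hf (D.neg_mem hf)

theorem partialSups_mem {g : ℕ → X → ℝ} (hg : ∀ k, g k ∈ D.U) (n : ℕ) :
    partialSups g n ∈ D.U := by
  induction n with
  | zero => simpa using hg 0
  | succ n ih => rw [partialSups_add_one]; exact D.sup_mem ih (hg _)

theorem integral_neg {f : X → ℝ} (hf : f ∈ D.U) : D.integral (-f) = -D.integral f := by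
  simpa using D.integral_smul (-1) hf

theorem integral_sub {f g : X → ℝ} (hf : f ∈ D.U) (hg : g ∈ D.U) :
    D.integral (f - g) = D.integral f - D.integral g := by
  rw [sub_eq_add_neg, D.integral_add hf (D.neg_mem hg), D.integral_neg hg, sub_eq_add_neg]

theorem integral_mono {f g : X → ℝ} (hf : f ∈ D.U) (hg : g ∈ D.U) (hfg : f ≤ g) :
    D.integral f ≤ D.integral g := by
  have := D.integral_nonneg (D.sub_mem hg hf) fun x => sub_nonneg.2 (hfg x)
  rwa [D.integral_sub hg hf, sub_nonneg] at this

theorem tendsto_integral_of_antitone_of_nullSet {S : Set X} (hS : D.NullSet S)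
    {g : ℕ → X → ℝ} (hg : ∀ n, g n ∈ D.U) (hanti : Antitone g) (hg0 : ∀ n, 0 ≤ g n)
    (hlim : ∀ x ∉ S, Tendsto (fun n => g n x) atTop (𝓝 0)) :
    Tendsto (fun n => D.integral (g n)) atTop (𝓝 0) := by
  set χ := S.indicator fun _ => (1 : ℝ)
  have hχ0 : 0 ≤ χ := indicator_nonneg fun _ _ => zero_le_one
  -- `(g n - n χ)⁺` decreases to `0` everywhere and dominates `g n` up to the null function `n χ`
  let r : ℕ → X → ℝ := fun n => (g n - (n : ℝ) • χ) ⊔ 0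
  have hnχ : ∀ n : ℕ, (n : ℝ) • χ ∈ D.U := fun n => D.smul_mem _ hS.1
  have hr : ∀ n, r n ∈ D.U := fun n => D.sup_mem (D.sub_mem (hg n) (hnχ n)) D.zero_mem
  have hr_anti : Antitone r := fun a b hab x =>
    max_le_max (sub_le_sub (hanti hab x) (mul_le_mul_of_nonneg_right (Nat.mono_cast hab) (hχ0 x)))
      le_rfl
  have hr_lim : ∀ x, Tendsto (fun n => r n x) atTop (𝓝 0) := by
    intro x
    by_cases hx : x ∈ S
    · refine tendsto_const_nhds.congr' ((eventually_ge_atTop ⌈g 0 x⌉₊).mono fun n hn => ?_)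
      have : g n x ≤ n := (hanti n.zero_le x).trans ((Nat.le_ceil _).trans (by exact_mod_cast hn))
      simp [r, χ, hx, this]
    · simpa [r, χ, hx] using (hlim x hx).max (tendsto_const_nhds (x := (0 : ℝ)))
  have hle : ∀ n, D.integral (g n) ≤ D.integral (r n) := fun n => by
    calc D.integral (g n) ≤ D.integral (r n + (n : ℝ) • χ) :=
          D.integral_mono (hg n) (D.add_mem (hr n) (hnχ n)) fun x => by
            simp only [Pi.add_apply, r, Pi.sup_apply, Pi.sub_apply, Pi.zero_apply]
            linarith [le_max_left (g n x - ((n : ℝ) • χ) x) 0]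
      _ = D.integral (r n) := by
          rw [D.integral_add (hr n) (hnχ n), D.integral_smul _ hS.1, hS.2, mul_zero, add_zero]
  exact squeeze_zero (fun n => D.integral_nonneg (hg n) (hg0 n)) hle
    (D.integral_tendsto_zero r hr hr_anti hr_lim)

variable {D}

theorem Complete.mem_of_monotone_of_tendsto (hD : D.Complete) {g : ℕ → X → ℝ} {G : X → ℝ}
    {C : ℝ} (hg : ∀ k, g k ∈ D.U) (hmono : Monotone g) (hC : ∀ k, D.integral (g k) ≤ C)
    (hG : ∀ x, Tendsto (fun k => g k x) atTop (𝓝 (G x))) : G ∈ D.U := by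
  let d : ℕ → X → ℝ := fun | 0 => g 0 | n + 1 => g (n + 1) - g n
  have hd : ∀ n, d n ∈ D.U := by
    rintro (_ | n)
    exacts [hg 0, D.sub_mem (hg _) (hg _)]
  have hd_abs : ∀ n, |d (n + 1)| = g (n + 1) - g n := fun n =>
    abs_of_nonneg (sub_nonneg.2 (hmono n.le_succ))
  have hd_sum : ∀ N x, ∑ i ∈ Finset.range (N + 1), d i x = g N x := by
    intro N x
    rw [Finset.sum_range_succ']
    simp only [d, Pi.sub_apply, Finset.sum_range_sub (fun i => g i x)]
    ring
  refine hD G d ⟨hd, ?_, fun x hx => ?_⟩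
  · rw [← summable_nat_add_iff 1]
    refine summable_of_sum_range_le (c := C - D.integral (g 0))
      (fun n => D.integral_nonneg (D.abs_mem (hd (n + 1))) fun x => abs_nonneg _) fun N => ?_
    calc ∑ i ∈ Finset.range N, D.integral |d (i + 1)| = D.integral (g N) - D.integral (g 0) := by
          simp only [hd_abs, D.integral_sub (hg _) (hg _)]
          exact Finset.sum_range_sub (fun i => D.integral (g i)) N
      _ ≤ C - D.integral (g 0) := by linarith [hC N]
  · rw [hasSum_iff_tendsto_nat_of_summable_norm (by simpa only [Real.norm_eq_abs] using hx),
      ← tendsto_add_atTop_iff_nat 1]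
    simpa only [hd_sum] using hG x

theorem Complete.mem_of_antitone_of_tendsto (hD : D.Complete) {g : ℕ → X → ℝ} {G : X → ℝ}
    {C : ℝ} (hg : ∀ k, g k ∈ D.U) (hanti : Antitone g) (hC : ∀ k, C ≤ D.integral (g k))
    (hG : ∀ x, Tendsto (fun k => g k x) atTop (𝓝 (G x))) : G ∈ D.U := by
  have := hD.mem_of_monotone_of_tendsto (G := -G) (C := -C) (fun k => D.neg_mem (hg k)) hanti.neg
    (fun k => by rw [D.integral_neg (hg k)]; linarith [hC k]) fun x => (hG x).neg
  simpa using D.neg_mem this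

theorem Complete.mem_of_eqOn_compl (hD : D.Complete) {S : Set X} (hS : D.NullSet S)
    {f F : X → ℝ} (hF : F ∈ D.U) (hfF : EqOn f F Sᶜ) : f ∈ D.U := by
  set χ := S.indicator fun _ => (1 : ℝ)
  have hχ : |χ| = χ := abs_of_nonneg (indicator_nonneg fun _ _ => zero_le_one)
  -- `f ≃ F + χ + χ + ⋯`: the series converges absolutely exactly off `S`
  let fs : ℕ → X → ℝ := fun | 0 => F | _ + 1 => χ
  refine hD f fs ⟨by rintro (_ | _); exacts [hF, hS.1], ?_, fun x hx => ?_⟩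
  · have hχint : D.integral χ = 0 := hS.2
    rw [← summable_nat_add_iff 1]
    simp [fs, hχ, hχint]
  · have hxS : x ∉ S := fun hxS => by
      rw [← summable_nat_add_iff 1] at hx
      simp [fs, χ, hxS, summable_const_iff] at hx
    rw [hfF hxS]
    exact hasSum_single (f := fun n => fs n x) 0 fun n hn => by
      obtain ⟨n, rfl⟩ := Nat.exists_eq_succ_of_ne_zero hn
      simp [fs, χ, hxS]

theorem Complete.mem_of_antitone_of_tendsto_off_nullSet (hD : D.Complete) {S : Set X}
    (hS : D.NullSet S) {u : ℕ → X → ℝ} {b f : X → ℝ} (hu : ∀ m, u m ∈ D.U) (hanti : Antitone u)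
    (hb : b ∈ D.U) (hbu : ∀ m, b ≤ u m)
    (hlim : ∀ x ∉ S, Tendsto (fun m => u m x) atTop (𝓝 (f x))) : f ∈ D.U := by
  have hF : ∀ x, Tendsto (fun m => u m x) atTop (𝓝 (⨅ m, u m x)) := fun x =>
    tendsto_atTop_ciInf (fun _ _ h => hanti h x) ⟨b x, forall_mem_range.2 fun m => hbu m x⟩
  exact hD.mem_of_eqOn_compl hS
    (hD.mem_of_antitone_of_tendsto hu hanti (fun m => D.integral_mono hb (hu m) (hbu m)) hF)
    fun x hx => tendsto_nhds_unique (hlim x hx) (hF x)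

theorem Complete.tailSup_mem (hD : D.Complete) {g : ℕ → X → ℝ} {h : X → ℝ}
    (hg : ∀ k, g k ∈ D.U) (hh : h ∈ D.U) (hgh : ∀ k, g k ≤ h) (m : ℕ) :
    (fun x => tailSup (g · x) m) ∈ D.U := by
  have hmem : ∀ n, partialSups (fun k => g (m + k)) n ∈ D.U := D.partialSups_mem fun k => hg _
  refine hD.mem_of_monotone_of_tendsto hmem (partialSups _).monotone
    (fun n => D.integral_mono (hmem n) hh (partialSups_le _ _ _ fun k _ => hgh _)) fun x => ?_
  simpa only [Pi.partialSups_apply] using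
    tendsto_partialSups_tailSup ⟨h x, forall_mem_range.2 fun k => hgh k x⟩ m

end DaniellSpace

theorem daniell_dominated_convergence_general {X : Type*} (D : DaniellSpace X)
    (hD : D.Complete) (fs : ℕ → X → ℝ) (f h : X → ℝ) (hfs : ∀ n, fs n ∈ D.U)
    (hh : h ∈ D.U) (hdom : ∀ n x, |fs n x| ≤ h x)
    (hae : ∃ S : Set X, D.NullSet S ∧
      ∀ x ∉ S, Tendsto (fun n => fs n x) atTop (𝓝 (f x))) :
    f ∈ D.U ∧ Tendsto (fun n => D.integral |fs n - f|) atTop (𝓝 (0 : ℝ)) := by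
  obtain ⟨S, hS, hlim⟩ := hae
  have hbdd : ∀ x, BddAbove (range fun n => fs n x) := fun x =>
    ⟨h x, forall_mem_range.2 fun n => (abs_le.1 (hdom n x)).2⟩
  have hf : f ∈ D.U := hD.mem_of_antitone_of_tendsto_off_nullSet hS
    (hD.tailSup_mem hfs hh fun n x => (abs_le.1 (hdom n x)).2)
    (fun _ _ hab x => tailSup_antitone (hbdd x) hab) (D.neg_mem hh)
    (fun m x => (abs_le.1 (hdom m x)).1.trans (le_tailSup (hbdd x) m 0))
    fun x hx => (hlim x hx).tailSup
  refine ⟨hf, ?_⟩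
  have hmem : ∀ n, |fs n - f| ∈ D.U := fun n => D.abs_mem (D.sub_mem (hfs n) hf)
  let e : ℕ → X → ℝ := fun m x => tailSup (fun k => |fs k x - f x|) m
  have hdom_sub : ∀ k, |fs k - f| ≤ h + |f| := fun k x =>
    (abs_sub _ _).trans (add_le_add (hdom k x) le_rfl)
  have hbdd_sub : ∀ x, BddAbove (range fun k => |fs k x - f x|) := fun x =>
    ⟨h x + |f x|, forall_mem_range.2 fun k => hdom_sub k x⟩
  have hle : ∀ n, |fs n - f| ≤ e n := fun n x => le_tailSup (hbdd_sub x) n 0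
  have he : ∀ n, e n ∈ D.U := hD.tailSup_mem hmem (D.add_mem hh (D.abs_mem hf)) hdom_sub
  have hint : Tendsto (fun n => D.integral (e n)) atTop (𝓝 0) :=
    D.tendsto_integral_of_antitone_of_nullSet hS he
      (fun _ _ hab x => tailSup_antitone (hbdd_sub x) hab)
      (fun n x => (abs_nonneg _).trans (hle n x))
      fun x hx => by simpa using ((hlim x hx).sub_const (f x)).abs.tailSup
  exact squeeze_zero (fun n => D.integral_nonneg (hmem n) fun x => abs_nonneg _)
    (fun n => D.integral_mono (hmem n) (he n) (hle n)) hint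

/-- Dominated Convergence Theorem: in a complete Daniell space, if `fₙ → f` a.e. and
`|fₙ| ≤ h ∈ 𝒰` for all `n`, then `f ∈ 𝒰` and `fₙ → f` in norm. -/
theorem daniell_dominated_convergence {X : Type*} [Nonempty X] (D : DaniellSpace X)
    (hD : D.Complete) (fs : ℕ → X → ℝ) (f h : X → ℝ) (hfs : ∀ n, fs n ∈ D.U)
    (hh : h ∈ D.U) (hdom : ∀ n x, |fs n x| ≤ h x)
    (hae : ∃ S : Set X, D.NullSet S ∧
      ∀ x ∉ S, Tendsto (fun n => fs n x) atTop (𝓝 (f x))) :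
    f ∈ D.U ∧ Tendsto (fun n => D.integral |fs n - f|) atTop (𝓝 (0 : ℝ)) :=
  daniell_dominated_convergence_general D hD fs f h hfs hh hdom hae
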